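/- Let V be a complex vector space, k ≥ 1, and T_i ∈ Lie^i V for 1 ≤ i ≤ k. If the tensor φ_k(T₁,…,T_k) ∈ V^{⊗k} is symmetric (invariant under every permutation of the k tensor factors), then φ_k(T₁,…,T_k) = (1/k!)·T₁^{⊗k}; in particular, a symmetric signature tensor has tensor rank at most 1. -/

import Mathlib

open TensorAlgebra

variable (V : Type*) [AddCommGroup V] [Module ℂ V]

/-- `IsLieElem V i x` says that `x ∈ V^{⊗i}` is an iterated commutator of `i`
elements of `V` inside the tensor algebra, where `[a,b] = a⊗b − b⊗a`. -/
inductive IsLieElem : ℕ → TensorAlgebra ℂ V → Prop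
  | base (v : V) : IsLieElem 1 (ι ℂ v)
  | bracket {a b : ℕ} {x y : TensorAlgebra ℂ V} :
      IsLieElem a x → IsLieElem b y → IsLieElem (a + b) (x * y - y * x)

/-- `Lie^i V`: the `i`-th homogeneous component of the free Lie algebra on `V`,
i.e. the linear span of all iterated commutators of `i` elements of `V`. -/
noncomputable def lieGrade (i : ℕ) : Submodule ℂ (TensorAlgebra ℂ V) :=
  Submodule.span ℂ {x | IsLieElem V i x}

/-- `φ_k(T₁,…,T_k) = Σ_α (1/ℓ!)·T_{α₁} ⊗ ⋯ ⊗ T_{α_ℓ}`, summing over all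
compositions `α = (α₁,…,α_ℓ)` of `k`; this is the degree-`k` component of
`exp(T₁ + T₂ + ⋯)` in the tensor algebra. -/
noncomputable def phiTA (k : ℕ) (T : ℕ → TensorAlgebra ℂ V) : TensorAlgebra ℂ V :=
  ∑ c : Composition k, ((c.length).factorial : ℂ)⁻¹ • (c.blocks.map T).prod

/-- `IsSymmetricAt V k x`: the degree-`k` tensor `x` is invariant under every
permutation of the `k` tensor factors.  This is expressed via the maps `P`
implementing the permutation `σ` on elementary tensors of degree `k`. -/
def IsSymmetricAt (k : ℕ) (x : TensorAlgebra ℂ V) : Prop :=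
  ∀ σ : Equiv.Perm (Fin k), ∀ P : TensorAlgebra ℂ V →ₗ[ℂ] TensorAlgebra ℂ V,
    (∀ v : Fin k → V,
      P ((List.ofFn fun i => ι ℂ (v i)).prod) = (List.ofFn fun i => ι ℂ (v (σ i))).prod) →
    P x = x

section Aux

variable {κ : Type*}

/-- Every list-permutation of tuples comes from an index permutation. -/
lemma exists_comp_perm {α : Type*} {n : ℕ} (f g : Fin n → α)
    (h : (List.ofFn f).Perm (List.ofFn g)) : ∃ τ : Equiv.Perm (Fin n), g = f ∘ τ := by
  classical
  have hcount : ∀ a, Fintype.card {i // g i = a} = Fintype.card {i // f i = a} := by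
    intro a
    have h1 : ∀ (p : Fin n → α), Fintype.card {i // p i = a} = (List.ofFn p).count a := by
      intro p
      rw [Fintype.card_subtype, ← Multiset.coe_count, ← Fin.univ_val_map,
        Multiset.count_map, Finset.card, Finset.filter_val]
      congr 1
      apply Multiset.filter_congr
      intro i _
      exact eq_comm
    rw [h1, h1, h.count_eq]
  let e : ∀ a, {i // g i = a} ≃ {i // f i = a} := fun a => Fintype.equivOfCardEq (hcount a)
  let τ : Fin n ≃ Fin n :=
    ((Equiv.sigmaFiberEquiv g).symm.trans
      (Equiv.sigmaCongrRight e)).trans (Equiv.sigmaFiberEquiv f)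
  refine ⟨τ, funext fun i => ?_⟩
  show g i = f (τ i)
  simp only [τ, Equiv.trans_apply, Equiv.sigmaFiberEquiv, Equiv.sigmaCongrRight,
    Equiv.coe_fn_symm_mk, Equiv.coe_fn_mk]
  exact ((e (g i)) ⟨i, rfl⟩).2.symm

/-- The permutation action on words of length `k` (identity on other words):
the letter at position `i` of the new word is the letter at position `σ i`. -/
def wordPerm (k : ℕ) (σ : Equiv.Perm (Fin k)) (w : FreeMonoid κ) : FreeMonoid κ :=
  if h : (FreeMonoid.toList w).length = k then
    FreeMonoid.ofList (List.ofFn fun i => (FreeMonoid.toList w).get (Fin.cast h.symm (σ i)))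
  else w

lemma wordPerm_ofFn {k : ℕ} (σ : Equiv.Perm (Fin k)) (g : Fin k → κ) :
    wordPerm k σ (FreeMonoid.ofList (List.ofFn g)) = FreeMonoid.ofList (List.ofFn (g ∘ σ)) := by
  have hlen : (FreeMonoid.toList (FreeMonoid.ofList (List.ofFn g))).length = k := by simp
  rw [wordPerm, dif_pos hlen]
  congr 1
  apply List.ext_get (by simp)
  intro i h1 h2
  simp [List.get_ofFn, Function.comp]
  rfl

/-- The linear map on the monoid algebra implementing `wordPerm`. -/
noncomputable def Qmap (κ : Type*) (k : ℕ) (σ : Equiv.Perm (Fin k)) :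
    MonoidAlgebra ℂ (FreeMonoid κ) →ₗ[ℂ] MonoidAlgebra ℂ (FreeMonoid κ) :=
  MonoidAlgebra.mapDomainLinearMap ℂ ℂ (wordPerm k σ)

lemma Qmap_single {k : ℕ} (σ : Equiv.Perm (Fin k)) (w : FreeMonoid κ) (c : ℂ) :
    Qmap κ k σ (MonoidAlgebra.single w c)
      = MonoidAlgebra.single (wordPerm k σ w) c :=
  MonoidAlgebra.mapDomainLinearMap_single _ _ _

/-- Total symmetrization operator. -/
noncomputable def Nmap (κ : Type*) (k : ℕ) :
    MonoidAlgebra ℂ (FreeMonoid κ) →ₗ[ℂ] MonoidAlgebra ℂ (FreeMonoid κ) :=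
  ∑ σ : Equiv.Perm (Fin k), Qmap κ k σ

lemma Nmap_apply {k : ℕ} (x : MonoidAlgebra ℂ (FreeMonoid κ)) :
    Nmap κ k x = ∑ σ : Equiv.Perm (Fin k), Qmap κ k σ x := by
  simp [Nmap, LinearMap.sum_apply]

lemma Nmap_ofFn_comp {k : ℕ} (g : Fin k → κ) (τ : Equiv.Perm (Fin k)) (c : ℂ) :
    Nmap κ k (MonoidAlgebra.single (FreeMonoid.ofList (List.ofFn (g ∘ τ))) c)
      = Nmap κ k (MonoidAlgebra.single (FreeMonoid.ofList (List.ofFn g)) c) := by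
  rw [Nmap_apply, Nmap_apply]
  simp only [Qmap_single, wordPerm_ofFn]
  refine Fintype.sum_equiv (Equiv.mulLeft τ) _ _ fun σ => ?_
  congr 2

lemma Nmap_perm {k : ℕ} {w w' : List κ} (hl : w.length = k) (hp : w.Perm w') (c : ℂ) :
    Nmap κ k (MonoidAlgebra.single (FreeMonoid.ofList w) c)
      = Nmap κ k (MonoidAlgebra.single (FreeMonoid.ofList w') c) := by
  have hl' : w'.length = k := hp.length_eq ▸ hl
  have hw : List.ofFn (fun i : Fin k => w.get (Fin.cast hl.symm i)) = w := by
    apply List.ext_get (by simp [hl])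
    intro i h1 h2
    simp [List.get_ofFn]
  have hw' : List.ofFn (fun i : Fin k => w'.get (Fin.cast hl'.symm i)) = w' := by
    apply List.ext_get (by simp [hl'])
    intro i h1 h2
    simp [List.get_ofFn]
  have hperm : (List.ofFn (fun i : Fin k => w.get (Fin.cast hl.symm i))).Perm
      (List.ofFn (fun i : Fin k => w'.get (Fin.cast hl'.symm i))) := by
    rw [hw, hw']; exact hp
  obtain ⟨τ, hτ⟩ := exists_comp_perm _ _ hperm
  rw [← hw, ← hw', hτ, Nmap_ofFn_comp]

open MonoidAlgebra in
/-- Span of words of length `d`. -/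
noncomputable def Wdeg (κ : Type*) (d : ℕ) : Submodule ℂ (MonoidAlgebra ℂ (FreeMonoid κ)) :=
  Submodule.span ℂ
    {x | ∃ w : List κ, w.length = d ∧ x = MonoidAlgebra.single (FreeMonoid.ofList w) (1 : ℂ)}

/-- Span of differences of words of length `d` that are rearrangements of each other. -/
noncomputable def Kdeg (κ : Type*) (d : ℕ) : Submodule ℂ (MonoidAlgebra ℂ (FreeMonoid κ)) :=
  Submodule.span ℂ
    {x | ∃ w w' : List κ, w.length = d ∧ w.Perm w' ∧
      x = MonoidAlgebra.single (FreeMonoid.ofList w) (1 : ℂ)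
        - MonoidAlgebra.single (FreeMonoid.ofList w') (1 : ℂ)}

lemma single_mem_Wdeg {d : ℕ} {w : List κ} (h : w.length = d) :
    MonoidAlgebra.single (FreeMonoid.ofList w) (1 : ℂ) ∈ Wdeg κ d :=
  Submodule.subset_span ⟨w, h, rfl⟩

lemma one_mem_Wdeg : (1 : MonoidAlgebra ℂ (FreeMonoid κ)) ∈ Wdeg κ 0 := by
  have : (1 : MonoidAlgebra ℂ (FreeMonoid κ))
      = MonoidAlgebra.single (FreeMonoid.ofList ([] : List κ)) 1 := rfl
  rw [this]
  exact single_mem_Wdeg rfl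

lemma Wdeg_mul {a b : ℕ} {x y : MonoidAlgebra ℂ (FreeMonoid κ)}
    (hx : x ∈ Wdeg κ a) (hy : y ∈ Wdeg κ b) : x * y ∈ Wdeg κ (a + b) := by
  induction hx using Submodule.span_induction with
  | mem x hx =>
    induction hy using Submodule.span_induction with
    | mem y hy =>
      obtain ⟨w, hw, rfl⟩ := hx
      obtain ⟨w', hw', rfl⟩ := hy
      rw [MonoidAlgebra.single_mul_single, one_mul]
      exact Submodule.subset_span ⟨w ++ w', by simp [hw, hw'], by rw [FreeMonoid.ofList_append]⟩
    | zero => rw [mul_zero]; exact zero_mem _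
    | add y z _ _ hy hz => rw [mul_add]; exact add_mem hy hz
    | smul c y _ hy => rw [mul_smul_comm]; exact Submodule.smul_mem _ _ hy
  | zero => rw [zero_mul]; exact zero_mem _
  | add x z _ _ hx hz => rw [add_mul]; exact add_mem hx hz
  | smul c x _ hx => rw [smul_mul_assoc]; exact Submodule.smul_mem _ _ hx

lemma Wdeg_bracket {a b : ℕ} {x y : MonoidAlgebra ℂ (FreeMonoid κ)}
    (hx : x ∈ Wdeg κ a) (hy : y ∈ Wdeg κ b) : x * y - y * x ∈ Kdeg κ (a + b) := by
  induction hx using Submodule.span_induction with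
  | mem x hx =>
    induction hy using Submodule.span_induction with
    | mem y hy =>
      obtain ⟨w, hw, rfl⟩ := hx
      obtain ⟨w', hw', rfl⟩ := hy
      rw [MonoidAlgebra.single_mul_single, MonoidAlgebra.single_mul_single, one_mul]
      refine Submodule.subset_span ⟨w ++ w', w' ++ w, by simp [hw, hw'],
        List.perm_append_comm, ?_⟩
      rw [FreeMonoid.ofList_append, FreeMonoid.ofList_append]
    | zero => simp
    | add y z _ _ hy hz =>
      have : x * (y + z) - (y + z) * x = (x * y - y * x) + (x * z - z * x) := by
        rw [mul_add, add_mul]; abel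
      rw [this]; exact add_mem hy hz
    | smul c y _ hy =>
      have : x * (c • y) - (c • y) * x = c • (x * y - y * x) := by
        rw [mul_smul_comm, smul_mul_assoc, smul_sub]
      rw [this]; exact Submodule.smul_mem _ _ hy
  | zero => simp
  | add x z _ _ hx hz =>
    have : (x + z) * y - y * (x + z) = (x * y - y * x) + (z * y - y * z) := by
      rw [mul_add, add_mul]; abel
    rw [this]; exact add_mem hx hz
  | smul c x _ hx =>
    have : (c • x) * y - y * (c • x) = c • (x * y - y * x) := by
      rw [mul_smul_comm, smul_mul_assoc, smul_sub]
    rw [this]; exact Submodule.smul_mem _ _ hx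

lemma Nmap_kill {k a m b : ℕ} (hk : a + m + b = k)
    {u z v : MonoidAlgebra ℂ (FreeMonoid κ)}
    (hu : u ∈ Wdeg κ a) (hz : z ∈ Kdeg κ m) (hv : v ∈ Wdeg κ b) :
    Nmap κ k (u * z * v) = 0 := by
  induction hu using Submodule.span_induction with
  | mem u hu =>
    induction hz using Submodule.span_induction with
    | mem z hz =>
      induction hv using Submodule.span_induction with
      | mem v hv =>
        obtain ⟨wu, hwu, rfl⟩ := hu
        obtain ⟨w, w', hw, hperm, rfl⟩ := hz
        obtain ⟨wv, hwv, rfl⟩ := hv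
        rw [mul_sub, sub_mul, map_sub]
        rw [MonoidAlgebra.single_mul_single, MonoidAlgebra.single_mul_single,
          MonoidAlgebra.single_mul_single, MonoidAlgebra.single_mul_single]
        rw [← FreeMonoid.ofList_append, ← FreeMonoid.ofList_append,
          ← FreeMonoid.ofList_append, ← FreeMonoid.ofList_append]
        rw [sub_eq_zero]
        refine Nmap_perm ?_ ?_ _
        · simp [hwu, hw, hwv, ← hk]; ring
        · have hpp := (hperm.append_right wv).append_left wu
          simpa [List.append_assoc] using hpp
      | zero => simp
      | add v₁ v₂ _ _ h1 h2 => rw [mul_add, map_add, h1, h2, add_zero]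
      | smul c v₁ _ h1 => rw [mul_smul_comm, map_smul, h1, smul_zero]
    | zero => simp
    | add z₁ z₂ _ _ h1 h2 => rw [mul_add, add_mul, map_add, h1, h2, add_zero]
    | smul c z₁ _ h1 => rw [mul_smul_comm, smul_mul_assoc, map_smul, h1, smul_zero]
  | zero => simp
  | add u₁ u₂ _ _ h1 h2 => rw [add_mul, add_mul, map_add, h1, h2, add_zero]
  | smul c u₁ _ h1 => rw [smul_mul_assoc, smul_mul_assoc, map_smul, h1, smul_zero]

end Aux

section Basis

variable {V : Type*} [AddCommGroup V] [Module ℂ V] {κ : Type*}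

/-- The tensor algebra of a free module is the monoid algebra on words. -/
noncomputable def ψb (b : Module.Basis κ ℂ V) :
    TensorAlgebra ℂ V ≃ₐ[ℂ] MonoidAlgebra ℂ (FreeMonoid κ) :=
  (TensorAlgebra.equivFreeAlgebra b).trans (FreeAlgebra.equivMonoidAlgebraFreeMonoid)

lemma ψb_ι_basis (b : Module.Basis κ ℂ V) (i : κ) :
    ψb b (ι ℂ (b i)) = MonoidAlgebra.single (FreeMonoid.of i) (1 : ℂ) := by
  simp only [ψb, AlgEquiv.trans_apply, TensorAlgebra.equivFreeAlgebra_ι_apply]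
  simp [FreeAlgebra.equivMonoidAlgebraFreeMonoid, MonoidAlgebra.of_apply]

lemma prod_single_of (l : List κ) :
    (l.map fun i => MonoidAlgebra.single (FreeMonoid.of i) (1 : ℂ)).prod
      = MonoidAlgebra.single (FreeMonoid.ofList l) 1 := by
  induction l with
  | nil => rfl
  | cons x xs ih =>
      rw [List.map_cons, List.prod_cons, ih, MonoidAlgebra.single_mul_single, one_mul,
        FreeMonoid.ofList_cons]

lemma ψb_word (b : Module.Basis κ ℂ V) {k : ℕ} (j : Fin k → κ) :
    ψb b ((List.ofFn fun i => ι ℂ (b (j i))).prod)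
      = MonoidAlgebra.single (FreeMonoid.ofList (List.ofFn j)) (1 : ℂ) := by
  rw [map_list_prod]
  rw [List.map_ofFn]
  have : (List.ofFn ((ψb b) ∘ fun i => ι ℂ (b (j i))))
      = List.map (fun i => MonoidAlgebra.single (FreeMonoid.of i) (1 : ℂ)) (List.ofFn j) := by
    rw [List.map_ofFn]
    congr 1
    funext i
    exact ψb_ι_basis b (j i)
  rw [this, prod_single_of]

lemma ψb_ι_mem (b : Module.Basis κ ℂ V) (v : V) : ψb b (ι ℂ v) ∈ Wdeg κ 1 := by
  have hv : ι ℂ v = ∑ i ∈ (b.repr v).support, (b.repr v) i • ι ℂ (b i) := by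
    conv_lhs => rw [← b.linearCombination_repr v]
    rw [Finsupp.linearCombination_apply, Finsupp.sum, map_sum]
    simp
  rw [hv, map_sum]
  refine Submodule.sum_mem _ fun i _ => ?_
  rw [map_smul]
  refine Submodule.smul_mem _ _ ?_
  rw [ψb_ι_basis]
  exact single_mem_Wdeg (w := [i]) rfl

lemma lie_mem_W (b : Module.Basis κ ℂ V) {d : ℕ} {z : TensorAlgebra ℂ V}
    (h : IsLieElem V d z) : ψb b z ∈ Wdeg κ d := by
  induction h with
  | base v => exact ψb_ι_mem b v
  | bracket hx hy ihx ihy =>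
      rw [map_sub, map_mul, map_mul]
      refine sub_mem (Wdeg_mul ihx ihy) ?_
      have h2 := Wdeg_mul ihy ihx
      rwa [Nat.add_comm] at h2

lemma lie_mem_K (b : Module.Basis κ ℂ V) {d : ℕ} {z : TensorAlgebra ℂ V}
    (h : IsLieElem V d z) (hd : 2 ≤ d) : ψb b z ∈ Kdeg κ d := by
  cases h with
  | base v => omega
  | bracket hx hy =>
      rw [map_sub, map_mul, map_mul]
      exact Wdeg_bracket (lie_mem_W b hx) (lie_mem_W b hy)

lemma grade_mem_W (b : Module.Basis κ ℂ V) {d : ℕ} {z : TensorAlgebra ℂ V}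
    (h : z ∈ lieGrade V d) : ψb b z ∈ Wdeg κ d := by
  have : lieGrade V d ≤ Submodule.comap (ψb b).toLinearMap (Wdeg κ d) :=
    Submodule.span_le.2 fun x hx => lie_mem_W b hx
  exact this h

lemma grade_mem_K (b : Module.Basis κ ℂ V) {d : ℕ} {z : TensorAlgebra ℂ V}
    (h : z ∈ lieGrade V d) (hd : 2 ≤ d) : ψb b z ∈ Kdeg κ d := by
  have : lieGrade V d ≤ Submodule.comap (ψb b).toLinearMap (Kdeg κ d) :=
    Submodule.span_le.2 fun x hx => lie_mem_K b hx hd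
  exact this h

/-- Key computation: the conjugated permutation operator implements the
permutation on elementary tensors. -/
lemma Pprop (b : Module.Basis κ ℂ V) {k : ℕ} (σ : Equiv.Perm (Fin k)) (v : Fin k → V) :
    ((ψb b).symm.toLinearMap ∘ₗ Qmap κ k σ ∘ₗ (ψb b).toLinearMap)
        ((List.ofFn fun i => ι ℂ (v i)).prod)
      = (List.ofFn fun i => ι ℂ (v (σ i))).prod := by
  have key :
      (((ψb b).symm.toLinearMap ∘ₗ Qmap κ k σ ∘ₗ (ψb b).toLinearMap).compMultilinearMap
        ((MultilinearMap.mkPiAlgebraFin ℂ k (TensorAlgebra ℂ V)).compLinearMap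
          fun _ => ι ℂ))
      = MultilinearMap.domDomCongr σ
        ((MultilinearMap.mkPiAlgebraFin ℂ k (TensorAlgebra ℂ V)).compLinearMap
          fun _ => ι ℂ) := by
    refine Module.Basis.ext_multilinear (fun _ => b) fun j => ?_
    simp only [LinearMap.compMultilinearMap_apply, MultilinearMap.compLinearMap_apply,
      MultilinearMap.mkPiAlgebraFin_apply, MultilinearMap.domDomCongr_apply,
      LinearMap.coe_comp, Function.comp_apply, AlgEquiv.toLinearMap_apply]
    rw [ψb_word b j, Qmap_single, wordPerm_ofFn]
    have : List.ofFn (j ∘ σ) = List.ofFn fun i => j (σ i) := rfl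
    rw [this]
    have := ψb_word b (fun i => j (σ i))
    rw [← this, AlgEquiv.symm_apply_apply]
  have := congrFun (congrArg DFunLike.coe key) v
  simpa using this

end Basis

/-- If `T_i ∈ Lie^i V` for `1 ≤ i ≤ k` and the signature
tensor `φ_k(T₁,…,T_k)` is symmetric, then `φ_k(T₁,…,T_k) = (1/k!)·T₁^{⊗k}`;
in particular, it is (up to scalar) an elementary tensor, i.e. has tensor rank
at most `1`. -/
theorem symmetric_signature_tensor_eq (k : ℕ) (hk : 1 ≤ k)
    (T : ℕ → TensorAlgebra ℂ V)
    (hT : ∀ i, 1 ≤ i → i ≤ k → T i ∈ lieGrade V i)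
    (hsymm : IsSymmetricAt V k (phiTA V k T)) :
    phiTA V k T = ((k.factorial : ℂ))⁻¹ • T 1 ^ k ∧
    ∃ v : V, phiTA V k T = ((k.factorial : ℂ))⁻¹ • (ι ℂ v) ^ k := by
  classical
  let b := Module.Basis.ofVectorSpace ℂ V
  set κ := Module.Basis.ofVectorSpaceIndex ℂ V
  -- T 1 is an elementary tensor
  have hdeg : ∀ {d : ℕ} {x : TensorAlgebra ℂ V}, IsLieElem V d x → 1 ≤ d := by
    intro d x h
    induction h with
    | base => exact le_refl 1
    | bracket _ _ h1 _ => omega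
  have hone : {x | IsLieElem V 1 x} ⊆ Set.range (ι ℂ : V →ₗ[ℂ] TensorAlgebra ℂ V) := by
    have key : ∀ d (x : TensorAlgebra ℂ V), IsLieElem V d x → d = 1 →
        x ∈ Set.range (ι ℂ : V →ₗ[ℂ] TensorAlgebra ℂ V) := by
      intro d x h
      induction h with
      | base v => exact fun _ => ⟨v, rfl⟩
      | bracket h1 h2 _ _ =>
          intro hd
          exact absurd hd (by have := hdeg h1; have := hdeg h2; omega)
    intro x hx
    exact key 1 x hx rfl
  obtain ⟨v0, hv0⟩ : ∃ v : V, T 1 = ι ℂ v := by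
    have h1 : T 1 ∈ lieGrade V 1 := hT 1 le_rfl hk
    have : lieGrade V 1 ≤ LinearMap.range (ι ℂ : V →ₗ[ℂ] TensorAlgebra ℂ V) := by
      rw [lieGrade, Submodule.span_le]
      intro x hx
      exact hone hx
    obtain ⟨v, hv⟩ := this h1
    exact ⟨v, hv.symm⟩
  set ψ := ψb b with hψ
  set x := phiTA V k T with hx
  set y := ψ x with hy
  -- symmetry gives Q-invariance
  have hQ : ∀ σ : Equiv.Perm (Fin k), Qmap κ k σ y = y := by
    intro σ
    have hs := hsymm σ (ψ.symm.toLinearMap ∘ₗ Qmap κ k σ ∘ₗ ψ.toLinearMap)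
      (fun v => Pprop b σ v)
    have : ψ.symm (Qmap κ k σ (ψ x)) = x := hs
    have := congrArg ψ this
    rwa [AlgEquiv.apply_symm_apply] at this
  have hNy : Nmap κ k y = (k.factorial : ℂ) • y := by
    rw [Nmap_apply]
    simp only [hQ]
    rw [Finset.sum_const, Finset.card_univ, Fintype.card_perm, Fintype.card_fin]
    exact (Nat.cast_smul_eq_nsmul ℂ _ _).symm
  -- N on the elementary tensor
  have helem : ∀ σ : Equiv.Perm (Fin k), Qmap κ k σ (ψ ((ι ℂ v0) ^ k)) = ψ ((ι ℂ v0) ^ k) := by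
    intro σ
    have h1 := Pprop b σ (fun _ => v0)
    have h2 : (List.ofFn fun _ : Fin k => ι ℂ v0).prod = (ι ℂ v0) ^ k := by
      rw [List.ofFn_const, List.prod_replicate]
    simp only [h2] at h1
    have : ψ.symm (Qmap κ k σ (ψ ((ι ℂ v0) ^ k))) = (ι ℂ v0) ^ k := h1
    have := congrArg ψ this
    rwa [AlgEquiv.apply_symm_apply] at this
  have hNelem : Nmap κ k (ψ ((ι ℂ v0) ^ k)) = (k.factorial : ℂ) • ψ ((ι ℂ v0) ^ k) := by
    rw [Nmap_apply]
    simp only [helem]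
    rw [Finset.sum_const, Finset.card_univ, Fintype.card_perm, Fintype.card_fin]
    exact (Nat.cast_smul_eq_nsmul ℂ _ _).symm
  -- expand y over compositions
  have hyexp : y = ∑ c : Composition k,
      ((c.length).factorial : ℂ)⁻¹ • ((c.blocks.map fun i => ψ (T i)).prod) := by
    rw [hy, hx, phiTA, map_sum]
    refine Finset.sum_congr rfl fun c _ => ?_
    rw [map_smul, map_list_prod, List.map_map]
    rfl
  -- N kills every composition except ones
  have hkill : ∀ c : Composition k, c ≠ Composition.ones k →
      Nmap κ k ((c.blocks.map fun i => ψ (T i)).prod) = 0 := by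
    intro c hc
    obtain ⟨i, hi, hi2⟩ := Composition.ne_ones_iff.1 hc
    obtain ⟨s, t, hst⟩ := List.append_of_mem hi
    have hblocks : ∀ j ∈ c.blocks, 1 ≤ j ∧ j ≤ k := by
      intro j hj
      refine ⟨c.one_le_blocks hj, ?_⟩
      calc j ≤ c.blocks.sum := List.single_le_sum (fun _ _ => Nat.zero_le _) _ hj
      _ = k := c.blocks_sum
    have hWlist : ∀ l : List ℕ, (∀ j ∈ l, 1 ≤ j ∧ j ≤ k) →
        (l.map fun i => ψ (T i)).prod ∈ Wdeg κ l.sum := by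
      intro l hl
      induction l with
      | nil => exact one_mem_Wdeg
      | cons a as ih =>
          rw [List.map_cons, List.prod_cons, List.sum_cons]
          exact Wdeg_mul
            (grade_mem_W b (hT a (hl a List.mem_cons_self).1
              (hl a List.mem_cons_self).2))
            (ih fun j hj => hl j (List.mem_cons_of_mem a hj))
    have hsumk : s.sum + i + t.sum = k := by
      have := c.blocks_sum
      rw [hst] at this
      simp at this
      omega
    have hsplit : (c.blocks.map fun i => ψ (T i)).prod
        = ((s.map fun i => ψ (T i)).prod * ψ (T i)) * (t.map fun i => ψ (T i)).prod := by
      rw [hst]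
      simp [List.prod_append, mul_assoc]
    rw [hsplit]
    have hmem : ∀ j ∈ s, 1 ≤ j ∧ j ≤ k := fun j hj =>
      hblocks j (by rw [hst]; exact List.mem_append_left _ hj)
    have hmem' : ∀ j ∈ t, 1 ≤ j ∧ j ≤ k := fun j hj =>
      hblocks j (by rw [hst]; exact List.mem_append_right _ (List.mem_cons_of_mem _ hj))
    have hik : 1 ≤ i ∧ i ≤ k := hblocks i hi
    have h0 := Nmap_kill (κ := κ) (k := k) (a := s.sum) (m := i) (b := t.sum) hsumk
      (hWlist s hmem) (grade_mem_K b (hT i hik.1 hik.2) hi2) (hWlist t hmem')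
    simpa [mul_assoc] using h0
  -- the ones term
  have hones : ((Composition.ones k).blocks.map fun i => ψ (T i)).prod = ψ (T 1) ^ k := by
    rw [Composition.ones_blocks]
    rw [List.map_replicate, List.prod_replicate]
  have hNyformula : Nmap κ k y = (k.factorial : ℂ)⁻¹ • Nmap κ k (ψ (T 1) ^ k) := by
    rw [hyexp, map_sum]
    rw [Finset.sum_eq_single (Composition.ones k)]
    · rw [map_smul, hones, Composition.ones_length]
    · intro c _ hc
      rw [map_smul, hkill c hc, smul_zero]
    · intro h
      exact absurd (Finset.mem_univ _) h
  have hψT1 : ψ (T 1) ^ k = ψ ((ι ℂ v0) ^ k) := by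
    rw [hv0, map_pow]
  have hkfac : (k.factorial : ℂ) ≠ 0 := by
    exact_mod_cast Nat.cast_ne_zero.2 (Nat.factorial_ne_zero k)
  -- combine
  have hfinal : (k.factorial : ℂ) • y = ψ ((ι ℂ v0) ^ k) := by
    rw [← hNy, hNyformula, hψT1, hNelem, smul_smul, inv_mul_cancel₀ hkfac, one_smul]
  have hyval : y = (k.factorial : ℂ)⁻¹ • ψ ((ι ℂ v0) ^ k) := by
    rw [← hfinal, smul_smul, inv_mul_cancel₀ hkfac, one_smul]
  have hxval : x = (k.factorial : ℂ)⁻¹ • (ι ℂ v0) ^ k := by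
    have := congrArg ψ.symm hyval
    rw [hy] at this
    rwa [AlgEquiv.symm_apply_apply, map_smul, AlgEquiv.symm_apply_apply] at this
  constructor
  · rw [hv0]; exact hxval
  · exact ⟨v0, hxval⟩
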